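/- Let α, δ ∈ ℝ, β > 0, and let λ ≥ 0 satisfy λ = 0 if α² + 3βδ > 0 and λ > 2√(−(α² + 3βδ))/(3β) if α² + 3βδ ≤ 0. Set c₋ := (α − √(3β²λ² + α² + 3βδ))/(3β) and s(m) := √(3(m − α/(3β))² − (α² + 3βδ)/(3β²)) for m ≤ c₋. Then there exists a constant C > 0, depending only on α, β, δ, λ, such that for every measurable f : (−∞, c₋) → ℂ with ∫_{−∞}^{c₋} |f(m)|² dm < ∞, one has ∫₀^∞ |∫_{−∞}^{c₋} e^{−x·s(m)} f(m) dm|² dx ≤ C ∫_{−∞}^{c₋} |f(m)|² dm. -/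

import Mathlib

open MeasureTheory

/-- `c₋ = (α − √(3β²λ² + α² + 3βδ))/(3β)`. -/
noncomputable def cMinus (α β δ lam : ℝ) : ℝ :=
  (α - Real.sqrt (3 * β ^ 2 * lam ^ 2 + α ^ 2 + 3 * β * δ)) / (3 * β)

/-- `s(m) = √(3(m − α/(3β))² − (α² + 3βδ)/(3β²))`. -/
noncomputable def sHNLS (α β δ : ℝ) (m : ℝ) : ℝ :=
  Real.sqrt (3 * (m - α / (3 * β)) ^ 2 - (α ^ 2 + 3 * β * δ) / (3 * β ^ 2))

/-!
The bound is a Schur test. Cauchy–Schwarz with the weight `√s(m)` gives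
`|∫ e^{-xs} f|² ≤ (∫ e^{-xs} / √s) · (∫ e^{-xs} √s |f|²)`. On `(-∞, c₋)` the function `s` is
positive, strictly decreasing and `|s'| ≥ √3/2`, so the substitution `t = s(m)` shows that the
image of Lebesgue measure under `s` is at most `2/√3` times Lebesgue measure on `(0, ∞)`; hence
the first factor is at most `(2/√3) ∫₀^∞ e^{-xt} / √t dt = (2/√3) √π / √x`. Integrating in `x`,
Tonelli and `∫₀^∞ e^{-xs} / √x dx = √π / √s` give the bound with `C = 2π/√3`.
-/

open Set Real ENNReal

theorem lintegral_mul_sq_le_of_weight {X : Type*} [MeasurableSpace X] {μ : Measure X}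
    {k g w : X → ℝ≥0∞} (hk : AEMeasurable k μ) (hg : AEMeasurable g μ) (hw : AEMeasurable w μ)
    (hw0 : ∀ᵐ m ∂μ, w m ≠ 0) (hw_top : ∀ᵐ m ∂μ, w m ≠ ∞) :
    (∫⁻ m, k m * g m ∂μ) ^ 2 ≤ (∫⁻ m, k m / w m ∂μ) * ∫⁻ m, k m * w m * g m ^ 2 ∂μ := by
  set u : X → ℝ≥0∞ := fun m ↦ (k m / w m) ^ (2⁻¹ : ℝ)
  set v : X → ℝ≥0∞ := fun m ↦ (k m * w m * g m ^ 2) ^ (2⁻¹ : ℝ)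
  have huv : ∀ᵐ m ∂μ, k m * g m = (u * v) m := by
    filter_upwards [hw0, hw_top] with m h0 htop
    have : k m / w m * (k m * w m * g m ^ 2) = (k m * g m) ^ 2 := by
      rw [div_eq_mul_inv]
      calc k m * (w m)⁻¹ * (k m * w m * g m ^ 2) = (w m)⁻¹ * w m * (k m * g m) ^ 2 := by ring
        _ = (k m * g m) ^ 2 := by rw [ENNReal.inv_mul_cancel h0 htop, one_mul]
    simp only [u, v, Pi.mul_apply]
    rw [← ENNReal.mul_rpow_of_nonneg _ _ (by norm_num), this]
    simpa using (ENNReal.pow_rpow_inv_natCast two_ne_zero (k m * g m)).symm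
  have holder := ENNReal.lintegral_mul_le_Lp_mul_Lq μ Real.HolderConjugate.two_two
    ((hk.div hw).pow_const (2⁻¹ : ℝ)) ((hk.mul hw |>.mul (hg.pow_const 2)).pow_const (2⁻¹ : ℝ))
  rw [lintegral_congr_ae huv]
  calc (∫⁻ m, (u * v) m ∂μ) ^ 2
      ≤ ((∫⁻ m, u m ^ (2 : ℝ) ∂μ) ^ (1 / 2 : ℝ) * (∫⁻ m, v m ^ (2 : ℝ) ∂μ) ^ (1 / 2 : ℝ)) ^ 2 := by
        gcongr
        exact holder
    _ = (∫⁻ m, u m ^ (2 : ℝ) ∂μ) * ∫⁻ m, v m ^ (2 : ℝ) ∂μ := by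
        rw [mul_pow, one_div, ← ENNReal.rpow_natCast, ← ENNReal.rpow_natCast,
          Nat.cast_ofNat, ENNReal.rpow_inv_rpow two_ne_zero, ENNReal.rpow_inv_rpow two_ne_zero]
    _ = _ := by simp only [u, v, ENNReal.rpow_inv_rpow two_ne_zero]

theorem lintegral_exp_neg_mul_div_sqrt {b : ℝ} (hb : 0 < b) :
    ∫⁻ t in Ioi 0, ENNReal.ofReal (exp (-(b * t)) / √t) = ENNReal.ofReal (√π / √b) := by
  have hval : ∫ t in Ioi 0, exp (-(b * t)) / √t = √π / √b := by
    have h := Real.integral_rpow_mul_exp_neg_mul_Ioi one_half_pos hb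
    rw [Real.Gamma_one_half_eq, ← sqrt_eq_rpow, one_div b, Real.sqrt_inv, inv_mul_eq_div] at h
    rw [← h]
    refine setIntegral_congr_fun measurableSet_Ioi fun t ht ↦ ?_
    rw [show (1 / 2 : ℝ) - 1 = -(1 / 2) by norm_num, rpow_neg (le_of_lt ht), ← sqrt_eq_rpow,
      inv_mul_eq_div]
  have hint : IntegrableOn (fun t ↦ exp (-(b * t)) / √t) (Ioi 0) :=
    Integrable.of_integral_ne_zero (by rw [hval]; positivity)
  rw [← hval, ofReal_integral_eq_lintegral_ofReal hint]
  exact ae_of_all _ fun t ↦ by positivity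

section LaplaceSchurTest

variable {X : Type*} [MeasurableSpace X] {μ : Measure X} {S : X → ℝ} {K : ℝ≥0∞}

theorem ae_pos_of_map_le (hSm : Measurable S) (hS : μ.map S ≤ K • volume.restrict (Ioi 0)) :
    ∀ᵐ m ∂μ, 0 < S m :=
  ae_of_ae_map hSm.aemeasurable
    ((Measure.absolutelyContinuous_of_le_smul hS).ae_le (ae_restrict_mem measurableSet_Ioi))

theorem lintegral_exp_neg_mul_div_sqrt_le (hSm : Measurable S)
    (hS : μ.map S ≤ K • volume.restrict (Ioi 0)) {x : ℝ} (hx : 0 < x) :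
    ∫⁻ m, ENNReal.ofReal (exp (-(x * S m)) / √(S m)) ∂μ ≤ K * ENNReal.ofReal (√π / √x) := by
  have hφ : Measurable fun t ↦ ENNReal.ofReal (exp (-(x * t)) / √t) := by fun_prop
  rw [← lintegral_exp_neg_mul_div_sqrt hx, ← lintegral_map hφ hSm, ← smul_eq_mul,
    ← lintegral_smul_measure]
  exact lintegral_mono' hS le_rfl

theorem sq_lintegral_exp_neg_mul_le (hSm : Measurable S)
    (hS : μ.map S ≤ K • volume.restrict (Ioi 0)) {g : X → ℝ≥0∞} (hg : Measurable g)
    {x : ℝ} (hx : 0 < x) :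
    (∫⁻ m, ENNReal.ofReal (exp (-(x * S m))) * g m ∂μ) ^ 2 ≤
      K * (ENNReal.ofReal (√π / √x) *
        ∫⁻ m, ENNReal.ofReal (exp (-(x * S m))) * ENNReal.ofReal √(S m) * g m ^ 2 ∂μ) := by
  have hpos := ae_pos_of_map_le hSm hS
  have hw0 : ∀ᵐ m ∂μ, ENNReal.ofReal √(S m) ≠ 0 := by
    filter_upwards [hpos] with m hm
    exact (ENNReal.ofReal_pos.2 (sqrt_pos.2 hm)).ne'
  have hweight : ∫⁻ m, ENNReal.ofReal (exp (-(x * S m))) / ENNReal.ofReal √(S m) ∂μ =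
      ∫⁻ m, ENNReal.ofReal (exp (-(x * S m)) / √(S m)) ∂μ := by
    refine lintegral_congr_ae ?_
    filter_upwards [hpos] with m hm
    rw [ENNReal.ofReal_div_of_pos (sqrt_pos.2 hm)]
  refine (lintegral_mul_sq_le_of_weight (k := fun m ↦ ENNReal.ofReal (exp (-(x * S m))))
    (w := fun m ↦ ENNReal.ofReal √(S m)) (by fun_prop) hg.aemeasurable (by fun_prop) hw0
    (ae_of_all _ fun _ ↦ ofReal_ne_top)).trans ?_
  rw [← mul_assoc, hweight]
  gcongr
  exact lintegral_exp_neg_mul_div_sqrt_le hSm hS hx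

theorem lintegral_sq_lintegral_exp_neg_mul_le [SFinite μ] (hSm : Measurable S)
    (hS : μ.map S ≤ K • volume.restrict (Ioi 0)) {g : X → ℝ≥0∞} (hg : Measurable g) :
    ∫⁻ x in Ioi 0, (∫⁻ m, ENNReal.ofReal (exp (-(x * S m))) * g m ∂μ) ^ 2 ≤
      K * ENNReal.ofReal π * ∫⁻ m, g m ^ 2 ∂μ := by
  have hpos := ae_pos_of_map_le hSm hS
  have hregroup : ∀ x m, ENNReal.ofReal (√π / √x) *
      (ENNReal.ofReal (exp (-(x * S m))) * ENNReal.ofReal √(S m) * g m ^ 2) =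
      ENNReal.ofReal √π *
        (ENNReal.ofReal (exp (-(S m * x)) / √x) * (ENNReal.ofReal √(S m) * g m ^ 2)) := by
    intro x m
    have : ENNReal.ofReal (√π / √x) * ENNReal.ofReal (exp (-(x * S m))) =
        ENNReal.ofReal √π * ENNReal.ofReal (exp (-(S m * x)) / √x) := by
      rw [← ofReal_mul (by positivity), ← ofReal_mul (by positivity), mul_comm x]
      ring_nf
    rw [← mul_assoc, ← mul_assoc, this]
    ring
  calc ∫⁻ x in Ioi 0, (∫⁻ m, ENNReal.ofReal (exp (-(x * S m))) * g m ∂μ) ^ 2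
      ≤ ∫⁻ x in Ioi 0, K * (ENNReal.ofReal (√π / √x) *
          ∫⁻ m, ENNReal.ofReal (exp (-(x * S m))) * ENNReal.ofReal √(S m) * g m ^ 2 ∂μ) :=
        setLIntegral_mono' measurableSet_Ioi fun x hx ↦ sq_lintegral_exp_neg_mul_le hSm hS hg hx
    _ = K * ∫⁻ x in Ioi 0, ∫⁻ m, ENNReal.ofReal √π *
          (ENNReal.ofReal (exp (-(S m * x)) / √x) * (ENNReal.ofReal √(S m) * g m ^ 2)) ∂μ := by
        rw [← lintegral_const_mul K (Measurable.lintegral_prod_right (by fun_prop))]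
        refine lintegral_congr fun x ↦ ?_
        simp_rw [← lintegral_const_mul' _ _ ofReal_ne_top, hregroup]
    _ = K * ∫⁻ m, (∫⁻ x in Ioi 0, ENNReal.ofReal √π *
          (ENNReal.ofReal (exp (-(S m * x)) / √x) * (ENNReal.ofReal √(S m) * g m ^ 2))) ∂μ := by
        rw [lintegral_lintegral_swap (by fun_prop)]
    _ = K * ∫⁻ m, ENNReal.ofReal π * g m ^ 2 ∂μ := by
        congr 1
        refine lintegral_congr_ae ?_
        filter_upwards [hpos] with m hm
        rw [lintegral_const_mul' _ _ ofReal_ne_top, lintegral_mul_const _ (by fun_prop),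
          lintegral_exp_neg_mul_div_sqrt hm, ← mul_assoc, ← mul_assoc,
          ← ofReal_mul (sqrt_nonneg _), ← ofReal_mul (by positivity),
          mul_div_assoc', mul_self_sqrt pi_nonneg, div_mul_cancel₀ _ (sqrt_pos.2 hm).ne']
    _ = K * ENNReal.ofReal π * ∫⁻ m, g m ^ 2 ∂μ := by
        rw [lintegral_const_mul _ (by fun_prop), mul_assoc]

end LaplaceSchurTest
theorem lintegral_comp_le_of_le_abs_deriv {s : Set ℝ} {F F' : ℝ → ℝ} {κ : ℝ}
    (hs : MeasurableSet s) (hF' : ∀ x ∈ s, HasDerivWithinAt F (F' x) s x) (hF : InjOn F s)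
    (hκ : 0 < κ) (hκF' : ∀ x ∈ s, κ ≤ |F' x|) (g : ℝ → ℝ≥0∞) :
    ∫⁻ x in s, g (F x) ≤ ENNReal.ofReal κ⁻¹ * ∫⁻ y in F '' s, g y := by
  rw [lintegral_image_eq_lintegral_abs_deriv_mul hs hF' hF,
    ← lintegral_const_mul' _ _ ofReal_ne_top]
  refine setLIntegral_mono' hs fun x hx ↦ ?_
  rw [← mul_assoc, ← ofReal_mul (inv_nonneg.2 hκ.le)]
  exact le_mul_of_one_le_left' (ENNReal.one_le_ofReal.2 ((one_le_inv_mul₀ hκ).2 (hκF' x hx)))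

section sHNLS

variable {α β δ lam m : ℝ}

theorem lt_cMinus_iff (hβ : 0 < β) :
    m < cMinus α β δ lam ↔
      0 < α - 3 * β * m ∧ 3 * β ^ 2 * lam ^ 2 + α ^ 2 + 3 * β * δ < (α - 3 * β * m) ^ 2 := by
  have : m < cMinus α β δ lam ↔ √(3 * β ^ 2 * lam ^ 2 + α ^ 2 + 3 * β * δ) < α - 3 * β * m := by
    rw [cMinus, lt_div_iff₀ (by positivity)]
    constructor <;> intro h <;> linarith
  rw [this]
  refine ⟨fun h ↦ ?_, fun ⟨hu, h⟩ ↦ (sqrt_lt' hu).2 h⟩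
  have hu : 0 < α - 3 * β * m := (sqrt_nonneg _).trans_lt h
  exact ⟨hu, (sqrt_lt' hu).1 h⟩

theorem sHNLS_radicand_eq (hβ : β ≠ 0) :
    3 * (m - α / (3 * β)) ^ 2 - (α ^ 2 + 3 * β * δ) / (3 * β ^ 2) =
      ((α - 3 * β * m) ^ 2 - (α ^ 2 + 3 * β * δ)) / (3 * β ^ 2) := by
  field_simp
  ring

theorem sHNLS_radicand_pos (hβ : 0 < β) (hm : m < cMinus α β δ lam) :
    0 < 3 * (m - α / (3 * β)) ^ 2 - (α ^ 2 + 3 * β * δ) / (3 * β ^ 2) := by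
  have h := ((lt_cMinus_iff hβ).1 hm).2
  rw [sHNLS_radicand_eq hβ.ne']
  exact div_pos (by nlinarith [sq_nonneg (β * lam)]) (by positivity)

theorem sHNLS_pos (hβ : 0 < β) (hm : m < cMinus α β δ lam) : 0 < sHNLS α β δ m :=
  sqrt_pos.2 (sHNLS_radicand_pos hβ hm)

theorem continuous_sHNLS : Continuous (sHNLS α β δ) := by
  unfold sHNLS
  fun_prop

theorem hasDerivAt_sHNLS (hβ : β ≠ 0)
    (hm : 0 < 3 * (m - α / (3 * β)) ^ 2 - (α ^ 2 + 3 * β * δ) / (3 * β ^ 2)) :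
    HasDerivAt (sHNLS α β δ) (-(α - 3 * β * m) / (β * sHNLS α β δ m)) m := by
  have hq : HasDerivAt (fun y ↦ 3 * (y - α / (3 * β)) ^ 2 - (α ^ 2 + 3 * β * δ) / (3 * β ^ 2))
      (6 * (m - α / (3 * β))) m := by
    refine ((((hasDerivAt_id m).sub_const (α / (3 * β))).pow 2).const_mul 3).sub_const
      ((α ^ 2 + 3 * β * δ) / (3 * β ^ 2)) |>.congr_deriv ?_
    simp only [id_eq]
    ring
  refine ((hasDerivAt_sqrt hm.ne').comp m hq).congr_deriv ?_
  have hs : sHNLS α β δ m ≠ 0 := sqrt_ne_zero'.2 hm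
  unfold sHNLS at hs ⊢
  field_simp
  ring

theorem strictAntiOn_sHNLS (hβ : 0 < β) : StrictAntiOn (sHNLS α β δ) (Iio (cMinus α β δ lam)) := by
  refine strictAntiOn_of_hasDerivWithinAt_neg (convex_Iio _) continuous_sHNLS.continuousOn
    (f' := fun m ↦ -(α - 3 * β * m) / (β * sHNLS α β δ m)) (fun m hm ↦ ?_) (fun m hm ↦ ?_)
  · rw [interior_Iio] at hm
    exact (hasDerivAt_sHNLS hβ.ne' (sHNLS_radicand_pos hβ hm)).hasDerivWithinAt
  · rw [interior_Iio] at hm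
    have hs := sHNLS_pos hβ hm
    exact div_neg_of_neg_of_pos (neg_neg_of_pos ((lt_cMinus_iff hβ).1 hm).1) (by positivity)

theorem le_abs_deriv_sHNLS (hβ : 0 < β)
    (hlam : α ^ 2 + 3 * β * δ ≤ 0 → 2 * √(-(α ^ 2 + 3 * β * δ)) / (3 * β) < lam)
    (hm : m < cMinus α β δ lam) :
    √3 / 2 ≤ |-(α - 3 * β * m) / (β * sHNLS α β δ m)| := by
  obtain ⟨hu, hR⟩ := (lt_cMinus_iff hβ).1 hm
  have hs := sHNLS_pos hβ hm
  have hdisc : -(α ^ 2 + 3 * β * δ) ≤ 3 * (α - 3 * β * m) ^ 2 := by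
    rcases le_or_gt (α ^ 2 + 3 * β * δ) 0 with hK | hK
    · have h := (div_lt_iff₀ (by positivity)).1 (hlam hK)
      have h2 : (2 * √(-(α ^ 2 + 3 * β * δ))) ^ 2 < (lam * (3 * β)) ^ 2 :=
        pow_lt_pow_left₀ h (by positivity) two_ne_zero
      rw [mul_pow, sq_sqrt (by linarith)] at h2
      nlinarith
    · nlinarith
  have hs_sq : 3 * β ^ 2 * sHNLS α β δ m ^ 2 = (α - 3 * β * m) ^ 2 - (α ^ 2 + 3 * β * δ) := by
    rw [sHNLS, sq_sqrt (sHNLS_radicand_pos hβ hm).le, sHNLS_radicand_eq hβ.ne']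
    field_simp
  rw [neg_div, abs_neg, abs_of_pos (by positivity), le_div_iff₀ (by positivity)]
  nlinarith [sq_sqrt (show (0 : ℝ) ≤ 3 by norm_num), sqrt_nonneg 3]

theorem lintegral_comp_sHNLS_le (hβ : 0 < β)
    (hlam : α ^ 2 + 3 * β * δ ≤ 0 → 2 * √(-(α ^ 2 + 3 * β * δ)) / (3 * β) < lam)
    (φ : ℝ → ℝ≥0∞) :
    ∫⁻ m in Iio (cMinus α β δ lam), φ (sHNLS α β δ m) ≤
      ENNReal.ofReal (2 / √3) * ∫⁻ t in Ioi 0, φ t := by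
  have himage : sHNLS α β δ '' Iio (cMinus α β δ lam) ⊆ Ioi 0 :=
    image_subset_iff.2 fun m hm ↦ sHNLS_pos hβ hm
  calc ∫⁻ m in Iio (cMinus α β δ lam), φ (sHNLS α β δ m)
      ≤ ENNReal.ofReal (√3 / 2)⁻¹ * ∫⁻ t in sHNLS α β δ '' Iio (cMinus α β δ lam), φ t :=
        lintegral_comp_le_of_le_abs_deriv measurableSet_Iio
          (fun m hm ↦ (hasDerivAt_sHNLS hβ.ne' (sHNLS_radicand_pos hβ hm)).hasDerivWithinAt)
          (strictAntiOn_sHNLS hβ).injOn (by positivity) (fun m hm ↦ le_abs_deriv_sHNLS hβ hlam hm) φ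
    _ ≤ ENNReal.ofReal (2 / √3) * ∫⁻ t in Ioi 0, φ t := by
        rw [inv_div]
        gcongr

theorem map_sHNLS_le (hβ : 0 < β)
    (hlam : α ^ 2 + 3 * β * δ ≤ 0 → 2 * √(-(α ^ 2 + 3 * β * δ)) / (3 * β) < lam) :
    (volume.restrict (Iio (cMinus α β δ lam))).map (sHNLS α β δ) ≤
      ENNReal.ofReal (2 / √3) • volume.restrict (Ioi 0) := by
  refine Measure.le_iff.2 fun T hT ↦ ?_
  rw [← lintegral_indicator_one hT, ← lintegral_indicator_one hT,
    lintegral_map (measurable_one.indicator hT) continuous_sHNLS.measurable,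
    lintegral_smul_measure, smul_eq_mul]
  exact lintegral_comp_sHNLS_le hβ hlam _

end sHNLS

theorem modified_laplace_L2_bound_i_general (α β δ : ℝ) (hβ : 0 < β) (lam : ℝ)
    (hlam2 : α ^ 2 + 3 * β * δ ≤ 0 →
      2 * Real.sqrt (-(α ^ 2 + 3 * β * δ)) / (3 * β) < lam) :
    ∃ C > 0, ∀ f : ℝ → ℂ, Measurable f →
      (∫⁻ m in Set.Iio (cMinus α β δ lam), ENNReal.ofReal (‖f m‖ ^ 2) < ⊤) →
      (∫⁻ x in Set.Ioi (0 : ℝ),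
          ENNReal.ofReal
            (‖∫ m in Set.Iio (cMinus α β δ lam),
                ((Real.exp (-(x * sHNLS α β δ m)) : ℝ) : ℂ) * f m‖ ^ 2)) ≤
        ENNReal.ofReal C *
          ∫⁻ m in Set.Iio (cMinus α β δ lam), ENNReal.ofReal (‖f m‖ ^ 2) := by
  refine ⟨2 / √3 * π, by positivity, fun f hf _ ↦ ?_⟩
  have hnorm : ∀ x, ENNReal.ofReal (‖∫ m in Iio (cMinus α β δ lam),
      ((exp (-(x * sHNLS α β δ m)) : ℝ) : ℂ) * f m‖ ^ 2) ≤
      (∫⁻ m in Iio (cMinus α β δ lam),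
        ENNReal.ofReal (exp (-(x * sHNLS α β δ m))) * ‖f m‖ₑ) ^ 2 := by
    intro x
    rw [ofReal_pow (norm_nonneg _), ofReal_norm]
    gcongr
    refine (enorm_integral_le_lintegral_enorm _).trans_eq (lintegral_congr fun m ↦ ?_)
    rw [← ofReal_norm, ← ofReal_norm, norm_mul, Complex.norm_real,
      Real.norm_of_nonneg (exp_pos _).le, ofReal_mul (exp_pos _).le]
  calc _ ≤ ∫⁻ x in Ioi 0, (∫⁻ m in Iio (cMinus α β δ lam),
          ENNReal.ofReal (exp (-(x * sHNLS α β δ m))) * ‖f m‖ₑ) ^ 2 := lintegral_mono hnorm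
    _ ≤ ENNReal.ofReal (2 / √3) * ENNReal.ofReal π *
          ∫⁻ m in Iio (cMinus α β δ lam), ‖f m‖ₑ ^ 2 :=
        lintegral_sq_lintegral_exp_neg_mul_le continuous_sHNLS.measurable (map_sHNLS_le hβ hlam2)
          hf.enorm
    _ = _ := by
        simp_rw [← ofReal_mul (by positivity : (0 : ℝ) ≤ 2 / √3), ← ofReal_norm,
          ← ofReal_pow (norm_nonneg _)]

/-- Modified Laplace transform bound, part (i):
`∫₀^∞ |∫_{−∞}^{c₋} e^{−x·s(m)} f(m) dm|² dx ≲ ∫_{−∞}^{c₋} |f(m)|² dm`. -/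
theorem modified_laplace_L2_bound_i (α β δ : ℝ) (hβ : 0 < β) (lam : ℝ)
    (hlam0 : 0 ≤ lam)
    (hlam1 : 0 < α ^ 2 + 3 * β * δ → lam = 0)
    (hlam2 : α ^ 2 + 3 * β * δ ≤ 0 →
      2 * Real.sqrt (-(α ^ 2 + 3 * β * δ)) / (3 * β) < lam) :
    ∃ C > 0, ∀ f : ℝ → ℂ, Measurable f →
      (∫⁻ m in Set.Iio (cMinus α β δ lam), ENNReal.ofReal (‖f m‖ ^ 2) < ⊤) →
      (∫⁻ x in Set.Ioi (0 : ℝ),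
          ENNReal.ofReal
            (‖∫ m in Set.Iio (cMinus α β δ lam),
                ((Real.exp (-(x * sHNLS α β δ m)) : ℝ) : ℂ) * f m‖ ^ 2)) ≤
        ENNReal.ofReal C *
          ∫⁻ m in Set.Iio (cMinus α β δ lam), ENNReal.ofReal (‖f m‖ ^ 2) :=
  modified_laplace_L2_bound_i_general α β δ hβ lam hlam2
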